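/- Let n ≥ 2 and 𝐚 = (a₁,a₂) ∈ [1,∞)². Then the one-parameter bilinear maximal operator 𝔐̃^𝐚 is not bounded from L¹(ℝⁿ) × L^∞(ℝⁿ) to L¹(ℝⁿ), and it is not bounded from L^∞(ℝⁿ) × L¹(ℝⁿ) to L¹(ℝⁿ); that is, there is no constant C with ‖𝔐̃^𝐚(f,g)‖_{L¹} ≤ C‖f‖_{L¹}‖g‖_{L^∞} for all f ∈ L¹, g ∈ L^∞, and likewise with the roles of the two L-spaces interchanged. -/

import Mathlib

open MeasureTheory Metric Set
open scoped ENNReal NNReal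

noncomputable section

abbrev Rn (n : ℕ) : Type := EuclideanSpace ℝ (Fin n)

/-- `L^r` quasi-norm (in `ℝ≥0∞`) of an `ℝ≥0∞`-valued function. -/
def lpNormE {α : Type*} [MeasurableSpace α] (μ : Measure α) (F : α → ℝ≥0∞) (r : ℝ≥0∞) : ℝ≥0∞ :=
  if r = 0 then 0 else if r = ∞ then essSup F μ
  else (∫⁻ x, F x ^ r.toReal ∂μ) ^ (1 / r.toReal)

/-- The degenerate surface `S₂^𝐚 = {(y,z) : |y|^{a₁} + |z|^{a₂} = 1} ⊆ ℝⁿ × ℝⁿ`. -/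
def S2 (n : ℕ) (a₁ a₂ : ℝ) : Set (Rn n × Rn n) := {p | ‖p.1‖ ^ a₁ + ‖p.2‖ ^ a₂ = 1}

/-- The normalized surface measure on `S₂^𝐚`, realized as the normalized
`(2n-1)`-dimensional Hausdorff measure restricted to the surface. -/
def μS2 (n : ℕ) (a₁ a₂ : ℝ) : Measure (Rn n × Rn n) :=
  (μH[(2 * (n : ℝ) - 1)] (S2 n a₁ a₂))⁻¹ • (μH[(2 * (n : ℝ) - 1)]).restrict (S2 n a₁ a₂)

/-- The biparametric bilinear average `𝒜^𝐚_{(t₁,t₂)}(f,g)(x)`. -/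
def biAvg (n : ℕ) (a₁ a₂ : ℝ) (f g : Rn n → ℝ) (t₁ t₂ : ℝ) (x : Rn n) : ℝ :=
  ∫ p, f (x - t₁ • p.1) * g (x - t₂ • p.2) ∂(μS2 n a₁ a₂)

/-- The biparametric bilinear maximal function `𝔐^𝐚(f,g)`. -/
def biMax (n : ℕ) (a₁ a₂ : ℝ) (f g : Rn n → ℝ) (x : Rn n) : ℝ≥0∞ :=
  ⨆ t₁ ∈ Ioi (0 : ℝ), ⨆ t₂ ∈ Ioi (0 : ℝ), ENNReal.ofReal |biAvg n a₁ a₂ f g t₁ t₂ x|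

/-- The one-parameter bilinear maximal function `𝔐̃^𝐚(f,g)(x) = sup_{t>0} |𝒜^𝐚_{(t,t)}(f,g)(x)|`. -/
def biMaxOne (n : ℕ) (a₁ a₂ : ℝ) (f g : Rn n → ℝ) (x : Rn n) : ℝ≥0∞ :=
  ⨆ t ∈ Ioi (0 : ℝ), ENNReal.ofReal |biAvg n a₁ a₂ f g t t x|

/-!
With `f` the indicator of the unit ball and `g ≡ 1`, `𝒜^𝐚_{(t,t)}(f,g)(x)` is the `μ`-measure of
`{(y,z) ∈ S₂^𝐚 : |x - t y| ≤ 1}`. For `|x| ≥ 2` and `t = 2|x|` this set contains the part of the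
surface lying over the ball of radius `1/t` around `x/t` in the `y`-variable. Over each such `y`
the slice in `z` is a sphere of radius at least `1/4`, so forgetting one coordinate of `z` maps this
cap onto a set containing a box of volume `≃ t^{-n}`. Hence `𝔐̃^𝐚(f,g)(x) ≳ |x|^{-n}`, which is not
integrable at infinity. The second statement is the first one for `(a₂, a₁)`, by the symmetry
`(y, z) ↦ (z, y)`.

This needs the normalising constant `μH^{2n-1}(S₂^𝐚)` to be finite. Where `|y|^{a₁} ≤ 1/2` the
surface is the graph `z = (1 - |y|^{a₁})^{1/a₂} ω` with `ω` on the unit sphere and a Lipschitz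
radius; charting the sphere by central projection of the faces of the cube exhibits this part as a
finite union of Lipschitz images of bounded subsets of `ℝ^{2n-1}`. The rest of the surface is the
mirror image of such a part.
-/

open Module

/-! ### Lipschitz images and Hausdorff measure -/

theorem hausdorffMeasure_lt_top_of_isBounded {E : Type*} [NormedAddCommGroup E]
    [NormedSpace ℝ E] [FiniteDimensional ℝ E] [MeasurableSpace E] [BorelSpace E] {s : Set E}
    (hs : Bornology.IsBounded s) : μH[finrank ℝ E] s < ∞ := by
  let e : E ≃L[ℝ] (Fin (finrank ℝ E) → ℝ) := .ofFinrankEq (finrank_fin_fun ℝ).symm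
  have hvol : μH[finrank ℝ E] (e '' s) < ∞ := by
    have h := hausdorffMeasure_pi_real (ι := Fin (finrank ℝ E))
    rw [Fintype.card_fin] at h
    rw [h]
    exact (e.lipschitz.isBounded_image hs).measure_lt_top
  rw [← e.symm_image_image s]
  exact (e.symm.lipschitz.hausdorffMeasure_image_le (Nat.cast_nonneg _) _).trans_lt
    (ENNReal.mul_lt_top (ENNReal.rpow_lt_top_of_nonneg (Nat.cast_nonneg _) ENNReal.coe_ne_top) hvol)

theorem LipschitzOnWith.hausdorffMeasure_image_lt_top {E X : Type*} [NormedAddCommGroup E]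
    [NormedSpace ℝ E] [FiniteDimensional ℝ E] [MeasurableSpace E] [BorelSpace E]
    [EMetricSpace X] [MeasurableSpace X] [BorelSpace X] {K : ℝ≥0} {f : E → X} {s : Set E}
    (hf : LipschitzOnWith K f s) (hs : Bornology.IsBounded s) :
    μH[finrank ℝ E] (f '' s) < ∞ :=
  (hf.hausdorffMeasure_image_le (Nat.cast_nonneg _)).trans_lt
    (ENNReal.mul_lt_top (ENNReal.rpow_lt_top_of_nonneg (Nat.cast_nonneg _) ENNReal.coe_ne_top)
      (hausdorffMeasure_lt_top_of_isBounded hs))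

theorem lipschitzOnWith_inv_norm_smul {E : Type*} [NormedAddCommGroup E] [NormedSpace ℝ E]
    {r : ℝ} (hr : 0 < r) :
    LipschitzOnWith (2 / r).toNNReal (fun u : E => ‖u‖⁻¹ • u) {u | r ≤ ‖u‖} := by
  refine LipschitzOnWith.of_dist_le_mul fun u (hu : r ≤ ‖u‖) v (hv : r ≤ ‖v‖) => ?_
  have hu0 : 0 < ‖u‖ := hr.trans_le hu
  have hv0 : 0 < ‖v‖ := hr.trans_le hv
  have hsplit : ‖u‖⁻¹ • u - ‖v‖⁻¹ • v = ‖u‖⁻¹ • (u - v) + (‖u‖⁻¹ * (‖v‖ - ‖u‖)) • (‖v‖⁻¹ • v) := by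
    have : ‖u‖⁻¹ * (‖v‖ - ‖u‖) * ‖v‖⁻¹ = ‖u‖⁻¹ - ‖v‖⁻¹ := by field_simp
    rw [smul_smul, this, smul_sub, sub_smul]
    abel
  rw [Real.coe_toNNReal _ (by positivity), dist_eq_norm, dist_eq_norm, hsplit]
  calc _ ≤ ‖u‖⁻¹ * ‖u - v‖ + ‖u‖⁻¹ * |‖v‖ - ‖u‖| * 1 := by
        refine (norm_add_le _ _).trans (le_of_eq ?_)
        rw [norm_smul, norm_smul, norm_smul, norm_inv, norm_inv, norm_norm, norm_norm,
          Real.norm_eq_abs, inv_mul_cancel₀ hv0.ne', abs_mul, abs_inv, abs_norm]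
    _ ≤ ‖u‖⁻¹ * ‖u - v‖ + ‖u‖⁻¹ * ‖u - v‖ := by
        rw [mul_one, abs_sub_comm]
        gcongr
        exact abs_norm_sub_norm_le u v
    _ = 2 / ‖u‖ * ‖u - v‖ := by ring
    _ ≤ 2 / r * ‖u - v‖ := by gcongr

theorem EuclideanSpace.norm_le_sqrt_card_mul {ι : Type*} [Fintype ι] {x : EuclideanSpace ℝ ι}
    {b : ℝ} (hb : 0 ≤ b) (h : ∀ i, |x i| ≤ b) : ‖x‖ ≤ √(Fintype.card ι) * b := by
  rw [EuclideanSpace.norm_eq, ← Real.sqrt_sq hb, ← Real.sqrt_mul (Nat.cast_nonneg _)]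
  gcongr
  calc ∑ i, ‖x i‖ ^ 2 ≤ ∑ _i : ι, b ^ 2 := by
        gcongr with i
        rw [Real.norm_eq_abs]
        exact h i
    _ = Fintype.card ι * b ^ 2 := by simp

theorem lipschitzOnWith_rpow_Icc_zero_one {a : ℝ} (ha : 1 ≤ a) :
    LipschitzOnWith a.toNNReal (fun t : ℝ => t ^ a) (Icc 0 1) := by
  refine (convex_Icc 0 1).lipschitzOnWith_of_nnnorm_hasDerivWithin_le
    (fun t _ => (Real.hasDerivAt_rpow_const (Or.inr ha)).hasDerivWithinAt) fun t ht => ?_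
  rw [← NNReal.coe_le_coe, coe_nnnorm, Real.coe_toNNReal _ (by linarith), Real.norm_eq_abs,
    abs_of_nonneg (by have := ht.1; positivity)]
  exact mul_le_of_le_one_right (by linarith) (Real.rpow_le_one ht.1 ht.2 (by linarith))

theorem lipschitzOnWith_rpow_Ici {p c : ℝ} (hp₀ : 0 ≤ p) (hp₁ : p ≤ 1) (hc : 0 < c) :
    LipschitzOnWith (p * c ^ (p - 1)).toNNReal (fun t : ℝ => t ^ p) (Ici c) := by
  refine (convex_Ici c).lipschitzOnWith_of_nnnorm_hasDerivWithin_le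
    (fun t ht => (Real.hasDerivAt_rpow_const (Or.inl (hc.trans_le ht).ne')).hasDerivWithinAt)
    fun t (ht : c ≤ t) => ?_
  rw [← NNReal.coe_le_coe, coe_nnnorm, Real.coe_toNNReal _ (by positivity), Real.norm_eq_abs,
    abs_of_nonneg (by have := hc.trans_le ht; positivity)]
  exact mul_le_mul_of_nonneg_left (Real.rpow_le_rpow_of_nonpos hc ht (by linarith)) hp₀

theorem LipschitzOnWith.smul_of_norm_le {α 𝕜 E : Type*} [PseudoMetricSpace α] [NormedField 𝕜]
    [SeminormedAddCommGroup E] [NormedSpace 𝕜 E] {f : α → 𝕜} {g : α → E} {s : Set α}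
    {Kf Kg A B : ℝ≥0} (hf : LipschitzOnWith Kf f s) (hg : LipschitzOnWith Kg g s)
    (hfA : ∀ x ∈ s, ‖f x‖ ≤ A) (hgB : ∀ x ∈ s, ‖g x‖ ≤ B) :
    LipschitzOnWith (A * Kg + B * Kf) (fun x => f x • g x) s := by
  refine LipschitzOnWith.of_dist_le_mul fun x hx y hy => ?_
  have hsplit : f x • g x - f y • g y = f x • (g x - g y) + (f x - f y) • g y := by
    rw [smul_sub, sub_smul]; abel
  rw [dist_eq_norm, hsplit, NNReal.coe_add, NNReal.coe_mul, NNReal.coe_mul, add_mul]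
  refine (norm_add_le _ _).trans (add_le_add ?_ ?_) <;> rw [norm_smul]
  · rw [mul_assoc, ← dist_eq_norm]
    exact mul_le_mul (hfA x hx) (hg.dist_le_mul x hx y hy) dist_nonneg A.2
  · rw [mul_comm, mul_assoc, ← dist_eq_norm]
    exact mul_le_mul (hgB y hy) (hf.dist_le_mul x hx y hy) dist_nonneg B.2

theorem lintegral_eq_top_of_ofReal_mul_inv_pow_finrank_le {E : Type*} [NormedAddCommGroup E]
    [NormedSpace ℝ E] [FiniteDimensional ℝ E] [MeasurableSpace E] [BorelSpace E] [Nontrivial E]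
    (μ : Measure E) [μ.IsAddHaarMeasure] {F : E → ℝ≥0∞} {C R : ℝ} (hC : 0 < C)
    (hF : ∀ x, R ≤ ‖x‖ → ENNReal.ofReal (C * (‖x‖ ^ finrank ℝ E)⁻¹) ≤ F x) :
    ∫⁻ x, F x ∂μ = ∞ := by
  set d := finrank ℝ E
  let f : ℝ → ℝ := (Ici R).indicator fun r => C * (r ^ d)⁻¹
  have hf₀ : ∀ x : E, 0 ≤ f ‖x‖ := fun x => by
    by_cases hx : R ≤ ‖x‖
    · simp only [f, indicator_of_mem (mem_Ici.2 hx)]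
      positivity
    · simp [f, hx]
  have hfF : ∀ x, ENNReal.ofReal (f ‖x‖) ≤ F x := fun x => by
    by_cases hx : R ≤ ‖x‖ <;> simp [f, hx, hF x]
  refine eq_top_iff.2 ((le_of_eq ?_).trans (lintegral_mono hfF))
  by_contra hfin
  have hint : Integrable (fun x : E => f ‖x‖) μ := by
    refine (lintegral_ofReal_ne_top_iff_integrable ?_ (ae_of_all _ hf₀)).1 (Ne.symm hfin)
    exact ((Measurable.indicator (by fun_prop) measurableSet_Ici).comp
      measurable_norm).aestronglyMeasurable
  rw [integrable_fun_norm_addHaar] at hint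
  refine not_integrableOn_Ioi_inv (a := max R 0) ?_
  have hinv : IntegrableOn (fun y : ℝ => C⁻¹ * (y ^ (d - 1) • f y)) (Ioi (max R 0)) :=
    (hint.mono_set (Ioi_subset_Ioi (le_max_right R 0))).const_mul C⁻¹
  refine (integrableOn_congr_fun (fun y (hy : max R 0 < y) => ?_) measurableSet_Ioi).1 hinv
  have hy₀ : 0 < y := (le_max_right R 0).trans_lt hy
  have hd : d = d - 1 + 1 := (Nat.sub_add_cancel finrank_pos).symm
  simp only [f, smul_eq_mul, indicator_of_mem (mem_Ici.2 ((le_max_left R 0).trans hy.le))]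
  rw [hd, pow_succ, Nat.add_sub_cancel]
  field_simp

def IsometryEquiv.prodComm (X Y : Type*) [PseudoEMetricSpace X] [PseudoEMetricSpace Y] :
    X × Y ≃ᵢ Y × X where
  toEquiv := Equiv.prodComm X Y
  isometry_toFun p q := by simp [Prod.edist_eq, max_comm]

@[simp]
theorem IsometryEquiv.prodComm_apply {X Y : Type*} [PseudoEMetricSpace X] [PseudoEMetricSpace Y]
    (p : X × Y) : IsometryEquiv.prodComm X Y p = p.swap :=
  rfl

/-! ### Finiteness of the surface measure -/

theorem lipschitzOnWith_one_sub_rpow_norm_rpow_inv {E : Type*} [SeminormedAddCommGroup E]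
    {a₁ a₂ : ℝ} (ha₁ : 1 ≤ a₁) (ha₂ : 1 ≤ a₂) :
    LipschitzOnWith ((a₂⁻¹ * 2⁻¹ ^ (a₂⁻¹ - 1)).toNNReal * a₁.toNNReal)
      (fun y : E => (1 - ‖y‖ ^ a₁) ^ a₂⁻¹) {y | ‖y‖ ^ a₁ ≤ 1 / 2} := by
  have hnorm : LipschitzOnWith 1 (fun y : E => ‖y‖) {y | ‖y‖ ^ a₁ ≤ 1 / 2} :=
    lipschitzWith_one_norm.lipschitzOnWith
  have hpow := (lipschitzOnWith_rpow_Icc_zero_one ha₁).comp hnorm fun y (hy : ‖y‖ ^ a₁ ≤ 1 / 2) =>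
    ⟨norm_nonneg y, by
      by_contra! h
      linarith [Real.one_lt_rpow h (by linarith : 0 < a₁)]⟩
  have hsub : LipschitzOnWith a₁.toNNReal (fun y : E => 1 - ‖y‖ ^ a₁) {y | ‖y‖ ^ a₁ ≤ 1 / 2} :=
    ((IsometryEquiv.subLeft (1 : ℝ)).isometry.lipschitz.comp_lipschitzOnWith hpow).weaken
      (by simp)
  have hroot := lipschitzOnWith_rpow_Ici (inv_nonneg.2 (by linarith : (0 : ℝ) ≤ a₂))
    (inv_le_one_of_one_le₀ ha₂) (by norm_num : (0 : ℝ) < 2⁻¹)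
  exact hroot.comp hsub fun y (hy : ‖y‖ ^ a₁ ≤ 1 / 2) => by
    change 2⁻¹ ≤ 1 - ‖y‖ ^ a₁; linarith

def coordHyperplane (n : ℕ) (j : Fin n) : Submodule ℝ (Rn n) :=
  (ℝ ∙ EuclideanSpace.single j 1)ᗮ

theorem mem_coordHyperplane {n : ℕ} {j : Fin n} {h : Rn n} :
    h ∈ coordHyperplane n j ↔ h j = 0 := by
  rw [coordHyperplane, Submodule.mem_orthogonal_singleton_iff_inner_right,
    EuclideanSpace.inner_single_left]
  simp

theorem finrank_coordHyperplane {n : ℕ} (j : Fin n) :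
    finrank ℝ (coordHyperplane n j) = n - 1 := by
  have : Fact (finrank ℝ (Rn n) = (n - 1) + 1) := ⟨by simp; have := j.pos; omega⟩
  exact Submodule.finrank_orthogonal_span_singleton (by simp)

def sphereChart {n : ℕ} (j : Fin n) (ε : ℝ) (h : coordHyperplane n j) : Rn n :=
  ‖(h : Rn n) + EuclideanSpace.single j ε‖⁻¹ • ((h : Rn n) + EuclideanSpace.single j ε)

theorem lipschitzWith_sphereChart {n : ℕ} (j : Fin n) {ε : ℝ} (hε : |ε| = 1) :
    LipschitzWith 2 (sphereChart j ε) := by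
  have hshift : LipschitzWith 1 fun h : coordHyperplane n j =>
      (h : Rn n) + EuclideanSpace.single j ε :=
    ((IsometryEquiv.addRight _).isometry.comp isometry_subtype_coe).lipschitz
  have hmaps : MapsTo (fun h : coordHyperplane n j => (h : Rn n) + EuclideanSpace.single j ε)
      univ {u | 1 ≤ ‖u‖} := fun h _ => by
    have := PiLp.norm_apply_le ((h : Rn n) + EuclideanSpace.single j ε) j
    simp_all [mem_coordHyperplane.1 h.2]
  rw [← lipschitzOnWith_univ]
  exact ((lipschitzOnWith_inv_norm_smul one_pos).comp hshift.lipschitzOnWith hmaps).weaken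
    (by norm_num)

theorem norm_sphereChart {n : ℕ} (j : Fin n) {ε : ℝ} (hε : |ε| = 1) (h : coordHyperplane n j) :
    ‖sphereChart j ε h‖ = 1 := by
  refine norm_smul_inv_norm fun h0 => ?_
  have := congrArg (fun u : Rn n => u j) h0
  simp [mem_coordHyperplane.1 h.2] at this
  simp [this] at hε

theorem exists_sphereChart_eq {n : ℕ} {ω : Rn n} (hω : ‖ω‖ = 1) :
    ∃ j ε, |ε| = 1 ∧ ∃ h : coordHyperplane n j, ‖(h : Rn n)‖ ≤ √n + 1 ∧ sphereChart j ε h = ω := by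
  have : Nonempty (Fin n) := by
    by_contra! h
    simp [Subsingleton.elim ω 0] at hω
  obtain ⟨j, hj⟩ := Finite.exists_max fun i => |ω i|
  have hωj : 1 ≤ √n * |ω j| := by
    simpa [hω] using EuclideanSpace.norm_le_sqrt_card_mul (abs_nonneg _) hj
  have hωj₀ : 0 < |ω j| := by
    by_contra! h
    nlinarith [abs_nonneg (ω j), Real.sqrt_nonneg n]
  set w := |ω j|⁻¹ • ω
  set ε := |ω j|⁻¹ * ω j
  have hε : |ε| = 1 := by simp [ε, abs_mul, hωj₀.ne']
  have hwj : w j = ε := by simp [w, ε]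
  have hmem : w - EuclideanSpace.single j ε ∈ coordHyperplane n j := by
    simp [mem_coordHyperplane, hwj]
  have hw : ‖w‖ = |ω j|⁻¹ := by simp [w, norm_smul, hω]
  refine ⟨j, ε, hε, ⟨_, hmem⟩, ?_, ?_⟩
  · calc ‖w - EuclideanSpace.single j ε‖ ≤ ‖w‖ + ‖EuclideanSpace.single j ε‖ := norm_sub_le _ _
      _ ≤ √n + 1 := by
        rw [hw, PiLp.norm_single, Real.norm_eq_abs, hε]
        gcongr
        rw [inv_le_iff_one_le_mul₀ hωj₀]
        linarith
  · simp only [sphereChart, sub_add_cancel, hw, inv_inv, w, smul_smul,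
      mul_inv_cancel₀ hωj₀.ne', one_smul]

/-- Over `y`, the surface `S₂^𝐚` is the sphere of radius `(1 - ‖y‖ ^ a₁) ^ a₂⁻¹`. -/
def S2Chart {n : ℕ} (a₁ a₂ : ℝ) (j : Fin n) (ε : ℝ) (q : Rn n × coordHyperplane n j) :
    Rn n × Rn n :=
  (q.1, (1 - ‖q.1‖ ^ a₁) ^ a₂⁻¹ • sphereChart j ε q.2)

theorem exists_lipschitzOnWith_S2Chart {n : ℕ} {a₁ a₂ : ℝ} (ha₁ : 1 ≤ a₁) (ha₂ : 1 ≤ a₂)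
    (j : Fin n) {ε : ℝ} (hε : |ε| = 1) :
    ∃ K, LipschitzOnWith K (S2Chart a₁ a₂ j ε) {q | ‖q.1‖ ^ a₁ ≤ 1 / 2} := by
  have hρ := (lipschitzOnWith_one_sub_rpow_norm_rpow_inv (E := Rn n) ha₁ ha₂).comp
    (LipschitzWith.prod_fst (α := Rn n) (β := coordHyperplane n j)).lipschitzOnWith
    (fun _ hq => hq)
  have hσ := ((lipschitzWith_sphereChart j hε).comp LipschitzWith.prod_snd).lipschitzOnWith
    (s := {q : Rn n × coordHyperplane n j | ‖q.1‖ ^ a₁ ≤ 1 / 2})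
  have hρ_le : ∀ q ∈ {q : Rn n × coordHyperplane n j | ‖q.1‖ ^ a₁ ≤ 1 / 2},
      ‖(1 - ‖q.1‖ ^ a₁) ^ a₂⁻¹‖ ≤ (1 : ℝ≥0) := fun q (hq : ‖q.1‖ ^ a₁ ≤ 1 / 2) => by
    have := Real.rpow_nonneg (norm_nonneg q.1) a₁
    rw [Real.norm_eq_abs, abs_of_nonneg (Real.rpow_nonneg (by linarith) _)]
    exact Real.rpow_le_one (by linarith) (by linarith) (by positivity)
  have hσ_le : ∀ q ∈ {q : Rn n × coordHyperplane n j | ‖q.1‖ ^ a₁ ≤ 1 / 2},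
      ‖sphereChart j ε q.2‖ ≤ (1 : ℝ≥0) := fun q _ => (norm_sphereChart j hε q.2).le
  exact ⟨_, LipschitzWith.prod_fst.lipschitzOnWith.prodMk (hρ.smul_of_norm_le hσ hρ_le hσ_le)⟩

theorem S2_inter_subset_iUnion_image_S2Chart {n : ℕ} {a₁ a₂ : ℝ} (ha₂ : 1 ≤ a₂) :
    S2 n a₁ a₂ ∩ {p | ‖p.1‖ ^ a₁ ≤ 1 / 2} ⊆ ⋃ j, ⋃ ε ∈ ({-1, 1} : Set ℝ), S2Chart a₁ a₂ j ε ''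
      ({y | ‖y‖ ^ a₁ ≤ 1 / 2} ×ˢ {h : coordHyperplane n j | ‖(h : Rn n)‖ ≤ √n + 1}) := by
  rintro ⟨y, z⟩ ⟨hp : ‖y‖ ^ a₁ + ‖z‖ ^ a₂ = 1, hy : ‖y‖ ^ a₁ ≤ 1 / 2⟩
  have hz₀ : ‖z‖ ≠ 0 := by
    intro h0
    rw [h0, Real.zero_rpow (by linarith)] at hp
    linarith
  have hz : (1 - ‖y‖ ^ a₁) ^ a₂⁻¹ = ‖z‖ := by
    rw [← eq_sub_of_add_eq' hp, Real.rpow_rpow_inv (norm_nonneg z) (by linarith)]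
  have hω : ‖‖z‖⁻¹ • z‖ = 1 := by rw [norm_smul, norm_inv, norm_norm, inv_mul_cancel₀ hz₀]
  obtain ⟨j, ε, hε, h, hh, hhω⟩ := exists_sphereChart_eq hω
  refine mem_iUnion.2 ⟨j, mem_iUnion₂.2 ⟨ε, ?_, (y, h), ⟨hy, hh⟩, ?_⟩⟩
  · rcases (abs_eq zero_le_one).1 hε with rfl | rfl <;> simp
  · simp only [S2Chart, hz, hhω, smul_smul, mul_inv_cancel₀ hz₀, one_smul]

theorem hausdorffMeasure_S2_inter_lt_top (n : ℕ) {a₁ a₂ : ℝ} (ha₁ : 1 ≤ a₁) (ha₂ : 1 ≤ a₂) :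
    μH[2 * (n : ℝ) - 1] (S2 n a₁ a₂ ∩ {p | ‖p.1‖ ^ a₁ ≤ 1 / 2}) < ∞ := by
  refine (measure_mono (S2_inter_subset_iUnion_image_S2Chart ha₂)).trans_lt <|
    (measure_iUnion_fintype_le _ _).trans_lt <| ENNReal.sum_lt_top.2 fun j _ =>
      measure_biUnion_lt_top (toFinite _) fun ε hε => ?_
  have hε : |ε| = 1 := by rcases hε with rfl | rfl <;> simp
  have hdim : 2 * (n : ℝ) - 1 = finrank ℝ (Rn n × coordHyperplane n j) := by
    rw [finrank_prod, finrank_euclideanSpace_fin, finrank_coordHyperplane]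
    have := j.pos
    push_cast [Nat.cast_sub (by omega : 1 ≤ n)]
    ring
  obtain ⟨K, hK⟩ := exists_lipschitzOnWith_S2Chart ha₁ ha₂ j hε
  have hbdd : Bornology.IsBounded {y : Rn n | ‖y‖ ^ a₁ ≤ 1 / 2} :=
    isBounded_closedBall.subset fun y (hy : ‖y‖ ^ a₁ ≤ 1 / 2) => by
      rw [mem_closedBall_zero_iff]
      exact (Real.rpow_le_rpow_iff (norm_nonneg y) zero_le_one (by linarith : (0 : ℝ) < a₁)).1
        (by rw [Real.one_rpow]; linarith)
  rw [hdim]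
  exact (hK.mono fun q hq => hq.1).hausdorffMeasure_image_lt_top
    (hbdd.prod ((isBounded_closedBall (x := 0) (r := √n + 1)).subset fun h hh =>
      mem_closedBall_zero_iff.2 hh))

theorem prodComm_preimage_S2 (n : ℕ) (a₁ a₂ : ℝ) :
    IsometryEquiv.prodComm (Rn n) (Rn n) ⁻¹' S2 n a₁ a₂ = S2 n a₂ a₁ := by
  ext p
  simp [S2, add_comm]

theorem hausdorffMeasure_S2_lt_top (n : ℕ) {a₁ a₂ : ℝ} (ha₁ : 1 ≤ a₁) (ha₂ : 1 ≤ a₂) :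
    μH[2 * (n : ℝ) - 1] (S2 n a₁ a₂) < ∞ := by
  let e := IsometryEquiv.prodComm (Rn n) (Rn n)
  have hcover : S2 n a₁ a₂ ⊆ (S2 n a₁ a₂ ∩ {p | ‖p.1‖ ^ a₁ ≤ 1 / 2}) ∪
      e ⁻¹' (S2 n a₂ a₁ ∩ {p | ‖p.1‖ ^ a₂ ≤ 1 / 2}) := fun p hp => by
    by_cases h : ‖p.1‖ ^ a₁ ≤ 1 / 2
    · exact Or.inl ⟨hp, h⟩
    · refine Or.inr ⟨by rwa [← prodComm_preimage_S2 n a₂ a₁] at hp, ?_⟩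
      have hp' : ‖p.1‖ ^ a₁ + ‖p.2‖ ^ a₂ = 1 := hp
      change ‖p.2‖ ^ a₂ ≤ 1 / 2
      linarith
  refine (measure_mono hcover).trans_lt ((measure_union_le _ _).trans_lt ?_)
  rw [IsometryEquiv.hausdorffMeasure_preimage]
  exact ENNReal.add_lt_top.2 ⟨hausdorffMeasure_S2_inter_lt_top n ha₁ ha₂,
    hausdorffMeasure_S2_inter_lt_top n ha₂ ha₁⟩

theorem map_prodComm_μS2 (n : ℕ) (a₁ a₂ : ℝ) :
    (μS2 n a₂ a₁).map (IsometryEquiv.prodComm (Rn n) (Rn n)) = μS2 n a₁ a₂ := by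
  let e := IsometryEquiv.prodComm (Rn n) (Rn n)
  have hrestrict : (μH[2 * (n : ℝ) - 1].restrict (S2 n a₂ a₁)).map e =
      μH[2 * (n : ℝ) - 1].restrict (S2 n a₁ a₂) := by
    have h := e.toHomeomorph.toMeasurableEquiv.restrict_map μH[2 * (n : ℝ) - 1] (S2 n a₁ a₂)
    rw [show ⇑e.toHomeomorph.toMeasurableEquiv = ⇑e from rfl, e.map_hausdorffMeasure] at h
    rw [← prodComm_preimage_S2, ← h]
  rw [μS2, μS2, Measure.map_smul, hrestrict, ← prodComm_preimage_S2 n a₁ a₂,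
    IsometryEquiv.hausdorffMeasure_preimage]

theorem biAvg_comm (n : ℕ) (a₁ a₂ : ℝ) (f g : Rn n → ℝ) (t₁ t₂ : ℝ) (x : Rn n) :
    biAvg n a₁ a₂ f g t₁ t₂ x = biAvg n a₂ a₁ g f t₂ t₁ x := by
  rw [biAvg, biAvg, ← map_prodComm_μS2]
  exact (integral_map_equiv (IsometryEquiv.prodComm (Rn n) (Rn n)).toHomeomorph.toMeasurableEquiv
    _).trans (integral_congr_ae (ae_of_all _ fun p => mul_comm _ _))

theorem biMaxOne_comm (n : ℕ) (a₁ a₂ : ℝ) (f g : Rn n → ℝ) :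
    biMaxOne n a₁ a₂ f g = biMaxOne n a₂ a₁ g f := by
  funext x
  simp only [biMaxOne, biAvg_comm n a₁ a₂ f g]

/-! ### Lower bound on caps -/

theorem exists_mem_S2_snoc {m : ℕ} {a₁ a₂ : ℝ} (ha₁ : 1 ≤ a₁) (ha₂ : 1 ≤ a₂) {y : Rn (m + 1)}
    (hy : ‖y‖ ≤ 3 / 4) {z' : Fin m → ℝ} (hz' : ∑ k, z' k ^ 2 ≤ 1 / 16) :
    ∃ z : Rn (m + 1), (y, z) ∈ S2 (m + 1) a₁ a₂ ∧ ∀ k, z k.castSucc = z' k := by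
  set ρ := (1 - ‖y‖ ^ a₁) ^ a₂⁻¹
  have hy₁ : ‖y‖ ^ a₁ ≤ 3 / 4 :=
    (Real.rpow_le_self_of_le_one (norm_nonneg y) (by linarith) ha₁).trans hy
  have hρ : 1 / 4 ≤ ρ := by
    have := Real.rpow_nonneg (norm_nonneg y) a₁
    calc (1 / 4 : ℝ) ≤ (1 - ‖y‖ ^ a₁) := by linarith
      _ ≤ ρ := Real.self_le_rpow_of_le_one (by linarith) (by linarith) (inv_le_one_of_one_le₀ ha₂)
  let z : Rn (m + 1) := WithLp.toLp 2 (Fin.snoc z' √(ρ ^ 2 - ∑ k, z' k ^ 2))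
  have hz : ‖z‖ = ρ := by
    rw [EuclideanSpace.norm_eq, Fin.sum_univ_castSucc]
    simp only [z, Real.norm_eq_abs, sq_abs, Fin.snoc_castSucc, Fin.snoc_last]
    rw [Real.sq_sqrt (by nlinarith), add_sub_cancel, Real.sqrt_sq (by linarith)]
  refine ⟨z, ?_, fun k => by simp [z]⟩
  change ‖y‖ ^ a₁ + ‖z‖ ^ a₂ = 1
  rw [hz, Real.rpow_inv_rpow (by linarith [Real.rpow_nonneg (norm_nonneg y) a₁]) (by linarith)]
  ring

def dropLast (m : ℕ) (p : Rn (m + 1) × Rn (m + 1)) : Fin (m + 1) ⊕ Fin m → ℝ :=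
  Sum.elim (fun j => p.1 j) (fun k => p.2 k.castSucc)

theorem lipschitzWith_dropLast (m : ℕ) : LipschitzWith 1 (dropLast m) := by
  refine LipschitzWith.of_dist_le_mul fun p q => ?_
  rw [NNReal.coe_one, one_mul, dist_pi_le_iff dist_nonneg]
  rintro (j | k)
  · calc dist (p.1 j) (q.1 j) ≤ dist p.1 q.1 := by
          simpa [dist_eq_norm] using PiLp.norm_apply_le (p.1 - q.1) j
      _ ≤ dist p q := by rw [Prod.dist_eq]; exact le_max_left _ _
  · calc dist (p.2 k.castSucc) (q.2 k.castSucc) ≤ dist p.2 q.2 := by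
          simpa [dist_eq_norm] using PiLp.norm_apply_le (p.2 - q.2) k.castSucc
      _ ≤ dist p q := by rw [Prod.dist_eq]; exact le_max_right _ _

theorem pi_Ioo_subset_image_dropLast {m : ℕ} {a₁ a₂ : ℝ} (ha₁ : 1 ≤ a₁) (ha₂ : 1 ≤ a₂)
    {v : Rn (m + 1)} (hv : ‖v‖ ≤ 1 / 2) {δ s β : ℝ} (hδ : δ ≤ 1 / 4) (hs : 0 ≤ s)
    (hsδ : √((m + 1 : ℕ) : ℝ) * s ≤ δ) (hβ : m * β ^ 2 ≤ 1 / 16) :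
    univ.pi (Sum.elim (fun j => Ioo (v j - s) (v j + s)) fun _ => Ioo (-β) β) ⊆
      dropLast m '' {p | p ∈ S2 (m + 1) a₁ a₂ ∧ ‖p.1 - v‖ ≤ δ} := by
  intro u hu
  rw [mem_univ_pi] at hu
  let y : Rn (m + 1) := WithLp.toLp 2 fun j => u (.inl j)
  have hyv : ‖y - v‖ ≤ δ := by
    refine (EuclideanSpace.norm_le_sqrt_card_mul hs fun j => ?_).trans (by simpa using hsδ)
    have := hu (.inl j)
    simp only [Sum.elim_inl, mem_Ioo] at this
    simp only [y, PiLp.sub_apply, abs_le]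
    constructor <;> linarith
  have hy : ‖y‖ ≤ 3 / 4 := by
    calc ‖y‖ = ‖v + (y - v)‖ := by rw [add_sub_cancel]
      _ ≤ ‖v‖ + ‖y - v‖ := norm_add_le _ _
      _ ≤ 3 / 4 := by linarith
  have hz' : ∑ k, u (.inr k) ^ 2 ≤ 1 / 16 := by
    calc ∑ k, u (.inr k) ^ 2 ≤ ∑ _k : Fin m, β ^ 2 := by
          refine Finset.sum_le_sum fun k _ => ?_
          have := hu (.inr k)
          simp only [Sum.elim_inr, mem_Ioo] at this
          rw [sq_le_sq, abs_le]
          constructor <;> linarith [le_abs_self β, neg_abs_le β]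
      _ = m * β ^ 2 := by simp
      _ ≤ 1 / 16 := hβ
  obtain ⟨z, hS, hz⟩ := exists_mem_S2_snoc ha₁ ha₂ hy hz'
  refine ⟨(y, z), ⟨hS, hyv⟩, funext ?_⟩
  rintro (j | k) <;> simp [dropLast, y, hz]

theorem exists_hausdorffMeasure_S2_cap_ge (m : ℕ) {a₁ a₂ : ℝ} (ha₁ : 1 ≤ a₁) (ha₂ : 1 ≤ a₂) :
    ∃ c > 0, ∀ v : Rn (m + 1), ‖v‖ ≤ 1 / 2 → ∀ δ, 0 < δ → δ ≤ 1 / 4 →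
      ENNReal.ofReal (c * δ ^ (m + 1)) ≤
        μH[2 * ((m + 1 : ℕ) : ℝ) - 1] {p | p ∈ S2 (m + 1) a₁ a₂ ∧ ‖p.1 - v‖ ≤ δ} := by
  set σ := (√((m + 1 : ℕ) : ℝ))⁻¹
  have hσ : 0 < σ := by positivity
  have hσ_sq : σ ^ 2 * (m + 1) = 1 := by
    rw [inv_pow, Real.sq_sqrt (Nat.cast_nonneg _)]
    push_cast
    field_simp
  refine ⟨(2 * σ) ^ (m + 1) * (σ / 2) ^ m, by positivity, fun v hv δ hδ hδ' => ?_⟩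
  set cap := {p | p ∈ S2 (m + 1) a₁ a₂ ∧ ‖p.1 - v‖ ≤ δ}
  -- Only the `y`-sides of the box shrink with `δ`, which gives the order `δ ^ (m + 1)`.
  set box := univ.pi (Sum.elim (fun j => Ioo (v j - δ * σ) (v j + δ * σ)) fun _ =>
    Ioo (-(σ / 4)) (σ / 4))
  have hbox : box ⊆ dropLast m '' cap :=
    pi_Ioo_subset_image_dropLast ha₁ ha₂ hv hδ' (by positivity)
      (by rw [mul_comm δ, ← mul_assoc, mul_inv_cancel₀ (by positivity), one_mul]) (by nlinarith)
  have hvol : volume box = ENNReal.ofReal ((2 * σ) ^ (m + 1) * (σ / 2) ^ m * δ ^ (m + 1)) := by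
    rw [volume_pi_pi, Fintype.prod_sum_type]
    simp only [Sum.elim_inl, Sum.elim_inr, Real.volume_Ioo, add_sub_sub_cancel, sub_neg_eq_add,
      Finset.prod_const, Finset.card_univ, Fintype.card_fin]
    rw [← ENNReal.ofReal_pow (by positivity), ← ENNReal.ofReal_pow (by positivity),
      ← ENNReal.ofReal_mul (by positivity)]
    congr 1
    ring
  have hdim : 2 * ((m + 1 : ℕ) : ℝ) - 1 = Fintype.card (Fin (m + 1) ⊕ Fin m) := by
    simp only [Fintype.card_sum, Fintype.card_fin]
    push_cast
    ring
  have hproj := (lipschitzWith_dropLast m).hausdorffMeasure_image_le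
    (d := Fintype.card (Fin (m + 1) ⊕ Fin m)) (Nat.cast_nonneg _) cap
  rw [ENNReal.coe_one, ENNReal.one_rpow, one_mul, hausdorffMeasure_pi_real] at hproj
  rw [hdim, ← hvol]
  exact (measure_mono hbox).trans hproj

/-! ### The maximal function -/

theorem lpNormE_one {α : Type*} [MeasurableSpace α] (μ : Measure α) (F : α → ℝ≥0∞) :
    lpNormE μ F 1 = ∫⁻ x, F x ∂μ := by
  simp [lpNormE]

theorem μS2_univ_le_one (n : ℕ) (a₁ a₂ : ℝ) : μS2 n a₁ a₂ univ ≤ 1 := by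
  rw [μS2, Measure.smul_apply, Measure.restrict_apply_univ, smul_eq_mul]
  exact ENNReal.inv_mul_le_one _

instance isFiniteMeasure_μS2 (n : ℕ) (a₁ a₂ : ℝ) : IsFiniteMeasure (μS2 n a₁ a₂) :=
  ⟨(μS2_univ_le_one n a₁ a₂).trans_lt ENNReal.one_lt_top⟩

theorem inv_mul_hausdorffMeasure_inter_S2_le_μS2 (n : ℕ) (a₁ a₂ : ℝ) (A : Set (Rn n × Rn n)) :
    (μH[2 * (n : ℝ) - 1] (S2 n a₁ a₂))⁻¹ * μH[2 * (n : ℝ) - 1] (A ∩ S2 n a₁ a₂) ≤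
      μS2 n a₁ a₂ A := by
  rw [μS2, Measure.smul_apply, smul_eq_mul]
  exact mul_le_mul_right (Measure.le_restrict_apply _ _) _

theorem biAvg_indicator_one (n : ℕ) (a₁ a₂ : ℝ) {s : Set (Rn n)} (hs : MeasurableSet s)
    (t : ℝ) (x : Rn n) :
    biAvg n a₁ a₂ (s.indicator 1) 1 t t x = (μS2 n a₁ a₂).real {p | x - t • p.1 ∈ s} := by
  have hmeas : MeasurableSet {p : Rn n × Rn n | x - t • p.1 ∈ s} :=
    hs.preimage (by fun_prop)
  rw [biAvg, ← integral_indicator_one hmeas]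
  congr 1 with p
  by_cases hp : x - t • p.1 ∈ s <;> simp [hp]

theorem μS2_le_biMaxOne_indicator (n : ℕ) (a₁ a₂ : ℝ) {s : Set (Rn n)} (hs : MeasurableSet s)
    {t : ℝ} (ht : 0 < t) (x : Rn n) :
    μS2 n a₁ a₂ {p | x - t • p.1 ∈ s} ≤ biMaxOne n a₁ a₂ (s.indicator 1) 1 x := by
  rw [← ofReal_measureReal, ← abs_of_nonneg measureReal_nonneg, ← biAvg_indicator_one n a₁ a₂ hs]
  exact le_iSup₂_of_le (f := fun t (_ : t ∈ Ioi (0 : ℝ)) =>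
    ENNReal.ofReal |biAvg n a₁ a₂ (s.indicator 1) 1 t t x|) t ht le_rfl

theorem hausdorffMeasure_S2_pos (m : ℕ) {a₁ a₂ : ℝ} (ha₁ : 1 ≤ a₁) (ha₂ : 1 ≤ a₂) :
    0 < μH[2 * ((m + 1 : ℕ) : ℝ) - 1] (S2 (m + 1) a₁ a₂) := by
  obtain ⟨c, hc, hcap⟩ := exists_hausdorffMeasure_S2_cap_ge m ha₁ ha₂
  exact (ENNReal.ofReal_pos.2 (by positivity)).trans_le
    ((hcap 0 (by norm_num) (1 / 4) (by norm_num) le_rfl).trans (measure_mono fun p hp => hp.1))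

theorem exists_biMaxOne_indicator_closedBall_ge (m : ℕ) {a₁ a₂ : ℝ} (ha₁ : 1 ≤ a₁)
    (ha₂ : 1 ≤ a₂) : ∃ C > 0, ∀ x : Rn (m + 1), 2 ≤ ‖x‖ →
      ENNReal.ofReal (C * (‖x‖ ^ (m + 1))⁻¹) ≤
        biMaxOne (m + 1) a₁ a₂ ((closedBall 0 1).indicator 1) 1 x := by
  obtain ⟨c, hc, hcap⟩ := exists_hausdorffMeasure_S2_cap_ge m ha₁ ha₂
  set K := μH[2 * ((m + 1 : ℕ) : ℝ) - 1] (S2 (m + 1) a₁ a₂)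
  have hK : K < ∞ := hausdorffMeasure_S2_lt_top (m + 1) ha₁ ha₂
  have hK₀ : 0 < K.toReal := ENNReal.toReal_pos (hausdorffMeasure_S2_pos m ha₁ ha₂).ne' hK.ne
  refine ⟨K.toReal⁻¹ * c * (1 / 2) ^ (m + 1), by positivity, fun x hx => ?_⟩
  set t := 2 * ‖x‖
  have ht : 0 < t := by positivity
  set cap := {p | p ∈ S2 (m + 1) a₁ a₂ ∧ ‖p.1 - t⁻¹ • x‖ ≤ t⁻¹}
  have hcap_sub : cap ⊆ {p | x - t • p.1 ∈ closedBall 0 1} := fun p ⟨_, hp⟩ => by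
    rw [mem_ofPred_eq, mem_closedBall_zero_iff, ← norm_neg, neg_sub,
      ← smul_inv_smul₀ ht.ne' x, ← smul_sub, norm_smul, Real.norm_of_nonneg ht.le]
    calc t * ‖p.1 - t⁻¹ • x‖ ≤ t * t⁻¹ := by gcongr
      _ = 1 := mul_inv_cancel₀ ht.ne'
  have hv : ‖t⁻¹ • x‖ ≤ 1 / 2 := by
    rw [norm_smul, norm_inv, Real.norm_of_nonneg ht.le, inv_mul_le_iff₀ ht]
    simp only [t]
    linarith
  have hδ : t⁻¹ ≤ 1 / 4 := by
    rw [inv_le_comm₀ ht (by norm_num)]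
    simp only [t]
    linarith
  calc ENNReal.ofReal (K.toReal⁻¹ * c * (1 / 2) ^ (m + 1) * (‖x‖ ^ (m + 1))⁻¹)
      = K⁻¹ * ENNReal.ofReal (c * t⁻¹ ^ (m + 1)) := by
        rw [← ENNReal.ofReal_toReal hK.ne, ← ENNReal.ofReal_inv_of_pos hK₀,
          ← ENNReal.ofReal_mul (by positivity), ENNReal.ofReal_toReal hK.ne]
        congr 1
        simp only [t]
        ring
    _ ≤ K⁻¹ * μH[2 * ((m + 1 : ℕ) : ℝ) - 1] (cap ∩ S2 (m + 1) a₁ a₂) := by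
        rw [inter_eq_left.2 fun p hp => hp.1]
        exact mul_le_mul_right (hcap _ hv _ (inv_pos.2 ht) hδ) _
    _ ≤ μS2 (m + 1) a₁ a₂ {p | x - t • p.1 ∈ closedBall 0 1} :=
        (inv_mul_hausdorffMeasure_inter_S2_le_μS2 _ _ _ _).trans (measure_mono hcap_sub)
    _ ≤ biMaxOne (m + 1) a₁ a₂ ((closedBall 0 1).indicator 1) 1 x :=
        μS2_le_biMaxOne_indicator _ _ _ measurableSet_closedBall ht x

theorem lintegral_biMaxOne_indicator_closedBall_eq_top (m : ℕ) {a₁ a₂ : ℝ} (ha₁ : 1 ≤ a₁)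
    (ha₂ : 1 ≤ a₂) :
    ∫⁻ x, biMaxOne (m + 1) a₁ a₂ ((closedBall (0 : Rn (m + 1)) 1).indicator 1) 1 x = ∞ := by
  obtain ⟨C, hC, hle⟩ := exists_biMaxOne_indicator_closedBall_ge m ha₁ ha₂
  exact lintegral_eq_top_of_ofReal_mul_inv_pow_finrank_le volume hC fun x hx => by
    simpa only [finrank_euclideanSpace_fin] using hle x hx

theorem not_exists_bound_L1_Linfty (m : ℕ) {a₁ a₂ : ℝ} (ha₁ : 1 ≤ a₁) (ha₂ : 1 ≤ a₂) :
    ¬ ∃ C : ℝ≥0, ∀ f g : Rn (m + 1) → ℝ, MemLp f 1 volume → MemLp g ∞ volume →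
      lpNormE volume (biMaxOne (m + 1) a₁ a₂ f g) 1 ≤
        C * eLpNorm f 1 volume * eLpNorm g ∞ volume := by
  rintro ⟨C, hC⟩
  have hf : MemLp ((closedBall (0 : Rn (m + 1)) 1).indicator (1 : Rn (m + 1) → ℝ)) 1 volume :=
    memLp_indicator_const 1 measurableSet_closedBall (1 : ℝ) (Or.inr measure_closedBall_lt_top.ne)
  have hg : MemLp (1 : Rn (m + 1) → ℝ) ∞ volume := memLp_top_const (1 : ℝ)
  have hbound := hC _ _ hf hg
  rw [lpNormE_one, lintegral_biMaxOne_indicator_closedBall_eq_top m ha₁ ha₂, top_le_iff] at hbound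
  exact (ENNReal.mul_lt_top (ENNReal.mul_lt_top ENNReal.coe_lt_top hf.2) hg.2).ne hbound

/-- The one-parameter bilinear maximal operator `𝔐̃^𝐚` is not bounded from
`L¹ × L^∞ → L¹`, nor from `L^∞ × L¹ → L¹`. -/
theorem bilinear_maximal_degenerate_surface_L1_failure
    (n : ℕ) (hn : 2 ≤ n) (a₁ a₂ : ℝ) (ha₁ : 1 ≤ a₁) (ha₂ : 1 ≤ a₂) :
    (¬ ∃ C : ℝ≥0, ∀ f g : Rn n → ℝ, MemLp f 1 volume → MemLp g ∞ volume →
      lpNormE volume (biMaxOne n a₁ a₂ f g) 1 ≤ C * eLpNorm f 1 volume * eLpNorm g ∞ volume) ∧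
    (¬ ∃ C : ℝ≥0, ∀ f g : Rn n → ℝ, MemLp f ∞ volume → MemLp g 1 volume →
      lpNormE volume (biMaxOne n a₁ a₂ f g) 1 ≤ C * eLpNorm f ∞ volume * eLpNorm g 1 volume) := by
  obtain ⟨m, rfl⟩ : ∃ m, n = m + 1 := ⟨n - 1, by omega⟩
  refine ⟨not_exists_bound_L1_Linfty m ha₁ ha₂, fun ⟨C, hC⟩ =>
    not_exists_bound_L1_Linfty m ha₂ ha₁ ⟨C, fun f g hf hg => ?_⟩⟩
  rw [biMaxOne_comm, mul_right_comm]
  exact hC g f hg hf
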